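/- arXiv:2401.11593 — 4 statements merged into one kernel-verified Lean document; each statement's English description precedes it below -/
import Mathlib

section
/- (Perov inequality, case α = 1/2.) Let u : [t₀, ∞) → ℝ be continuous and nonnegative, let a, b : [t₀, ∞) → ℝ be continuous nonnegative functions, and let c ≥ 0. If u(t) ≤ c + ∫_{t₀}^t (a(s)·u(s) + b(s)·√(u(s))) ds for all t ≥ t₀, then u(t) ≤ ( √c · exp((1/2)∫_{t₀}^t a(s) ds) + (1/2)∫_{t₀}^t b(s)·exp((1/2)∫_s^t a(r) dr) ds )². -/
/-! Put `v = c + ∫ (a u + b √u)`, so that `u ≤ v` and `v' ≤ a v + b √v`. When `v > 0` the function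
`w = √v` is differentiable and satisfies the *linear* differential inequality `w' ≤ (a w + b) / 2`,
which the integrating factor `exp (-½ ∫ a)` turns into the stated bound on `√u ≤ w`.
For `c = 0` the square root is not differentiable at `v = 0`, so one proves the bound for `c + ε`
and lets `ε → 0⁺`. -/

open Set Filter MeasureTheory intervalIntegral Topology Real

section Primitive

variable {f : ℝ → ℝ} {a b : ℝ}

theorem ContinuousOn.continuousOn_primitive_of_Icc (hab : a ≤ b) (hf : ContinuousOn f (Icc a b)) :
    ContinuousOn (fun x => ∫ s in a..x, f s) (Icc a b) := by
  have h := continuousOn_primitive_interval (μ := volume) (f := f) (a := a) (b := b)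
    (by rw [uIcc_of_le hab]; exact hf.integrableOn_Icc)
  rwa [uIcc_of_le hab] at h

theorem ContinuousOn.hasDerivAt_primitive_of_mem_Ioo (hf : ContinuousOn f (Icc a b)) {x : ℝ}
    (hx : x ∈ Ioo a b) : HasDerivAt (fun y => ∫ s in a..y, f s) (f x) x :=
  integral_hasDerivAt_right
    ((hf.mono (Icc_subset_Icc_right hx.2.le)).intervalIntegrable_of_Icc hx.1.le)
    ((hf.mono Ioo_subset_Icc_self).stronglyMeasurableAtFilter isOpen_Ioo x hx)
    (hf.continuousAt (Icc_mem_nhds hx.1 hx.2))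

end Primitive

theorem le_of_hasDerivAt_le_mul_add {w w' p q : ℝ → ℝ} {t₀ t : ℝ} (ht : t₀ ≤ t)
    (hp : ContinuousOn p (Icc t₀ t)) (hq : ContinuousOn q (Icc t₀ t))
    (hw : ContinuousOn w (Icc t₀ t)) (hw' : ∀ x ∈ Ioo t₀ t, HasDerivAt w (w' x) x)
    (hle : ∀ x ∈ Ioo t₀ t, w' x ≤ p x * w x + q x) :
    w t ≤ w t₀ * exp (∫ s in t₀..t, p s) + ∫ s in t₀..t, q s * exp (∫ r in s..t, p r) := by
  set P : ℝ → ℝ := fun y => ∫ s in t₀..y, p s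
  have hP : ContinuousOn P (Icc t₀ t) := hp.continuousOn_primitive_of_Icc ht
  have hqe : ContinuousOn (fun s => q s * exp (-P s)) (Icc t₀ t) := hq.mul hP.neg.rexp
  -- `w e^{-P}` minus a primitive of `q e^{-P}` has derivative `e^{-P} (w' - p w - q) ≤ 0`.
  set F : ℝ → ℝ := fun y => w y * exp (-P y) - ∫ s in t₀..y, q s * exp (-P s)
  have hF : AntitoneOn F (Icc t₀ t) := by
    refine antitoneOn_of_hasDerivWithinAt_nonpos (convex_Icc t₀ t)
      ((hw.mul hP.neg.rexp).sub (hqe.continuousOn_primitive_of_Icc ht))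
      (f' := fun x => exp (-P x) * (w' x - (p x * w x + q x))) ?_ ?_
    · intro x hx
      rw [interior_Icc] at hx
      have hFx : HasDerivAt F
          (w' x * exp (-P x) + w x * (exp (-P x) * -p x) - q x * exp (-P x)) x :=
        ((hw' x hx).mul (hp.hasDerivAt_primitive_of_mem_Ioo hx).neg.exp).sub
        (hqe.hasDerivAt_primitive_of_mem_Ioo hx)
      exact (hFx.congr_deriv (by ring)).hasDerivWithinAt
    · intro x hx
      rw [interior_Icc] at hx
      exact mul_nonpos_of_nonneg_of_nonpos (exp_pos _).le (sub_nonpos.2 (hle x hx))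
  have hFt : F t ≤ w t₀ := by
    simpa [F, P] using hF ⟨le_rfl, ht⟩ ⟨ht, le_rfl⟩ ht
  have hpi : ∀ s ∈ Icc t₀ t, IntervalIntegrable p volume t₀ s := fun s hs =>
    (hp.mono (Icc_subset_Icc_right hs.2)).intervalIntegrable_of_Icc hs.1
  have hG : (∫ s in t₀..t, q s * exp (-P s)) * exp (P t)
      = ∫ s in t₀..t, q s * exp (∫ r in s..t, p r) := by
    rw [← intervalIntegral.integral_mul_const]
    refine integral_congr fun s hs => ?_
    rw [uIcc_of_le ht] at hs
    rw [mul_assoc, ← exp_add, ← integral_interval_sub_left (hpi t ⟨ht, le_rfl⟩) (hpi s hs),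
      neg_add_eq_sub]
  calc w t = w t * exp (-P t) * exp (P t) := by
        rw [mul_assoc, ← exp_add, neg_add_cancel, exp_zero, mul_one]
    _ ≤ (w t₀ + ∫ s in t₀..t, q s * exp (-P s)) * exp (P t) := by
        gcongr
        linarith [hFt]
    _ = _ := by rw [add_mul, hG]

theorem perov_inequality_half_of_pos {t₀ : ℝ} {c : ℝ} (hc : 0 < c) (u a b : ℝ → ℝ)
    (hu_cont : ContinuousOn u (Ici t₀)) (ha_cont : ContinuousOn a (Ici t₀))
    (hb_cont : ContinuousOn b (Ici t₀)) (hu_nonneg : ∀ t ∈ Ici t₀, 0 ≤ u t)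
    (ha_nonneg : ∀ t ∈ Ici t₀, 0 ≤ a t) (hb_nonneg : ∀ t ∈ Ici t₀, 0 ≤ b t)
    (hineq : ∀ t ∈ Ici t₀, u t ≤ c + ∫ s in t₀..t, (a s * u s + b s * √(u s)))
    (t : ℝ) (ht : t₀ ≤ t) :
    u t ≤ (√c * exp ((1 / 2) * ∫ s in t₀..t, a s)
      + (1 / 2) * ∫ s in t₀..t, b s * exp ((1 / 2) * ∫ r in s..t, a r)) ^ 2 := by
  have hIcc : Icc t₀ t ⊆ Ici t₀ := fun _ hx => hx.1
  set f : ℝ → ℝ := fun s => a s * u s + b s * √(u s)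
  have hf : ContinuousOn f (Icc t₀ t) :=
    ((ha_cont.mul hu_cont).add (hb_cont.mul hu_cont.sqrt)).mono hIcc
  set v : ℝ → ℝ := fun x => c + ∫ s in t₀..x, f s
  have huv : ∀ x ∈ Icc t₀ t, u x ≤ v x := fun x hx => hineq x hx.1
  have hv_pos : ∀ x ∈ Icc t₀ t, 0 < v x := fun x hx =>
    add_pos_of_pos_of_nonneg hc <| integral_nonneg hx.1 fun s hs =>
      add_nonneg (mul_nonneg (ha_nonneg s hs.1) (hu_nonneg s hs.1))
        (mul_nonneg (hb_nonneg s hs.1) (sqrt_nonneg _))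
  have hw' : ∀ x ∈ Ioo t₀ t, HasDerivAt (fun y => √(v y)) (f x / (2 * √(v x))) x := fun x hx =>
    ((hf.hasDerivAt_primitive_of_mem_Ioo hx).const_add c).sqrt
      (hv_pos x (Ioo_subset_Icc_self hx)).ne'
  -- `f ≤ a v + b √v` because `u ≤ v`, and dividing by `2 √v` linearises the inequality.
  have hle : ∀ x ∈ Ioo t₀ t,
      f x / (2 * √(v x)) ≤ (1 / 2 * a x) * √(v x) + 1 / 2 * b x := by
    intro x hx
    have hx' := Ioo_subset_Icc_self hx
    have hsqrt : 0 < √(v x) := sqrt_pos.2 (hv_pos x hx')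
    have hfv : f x ≤ a x * √(v x) ^ 2 + b x * √(v x) := by
      rw [sq_sqrt (hv_pos x hx').le]
      exact add_le_add (mul_le_mul_of_nonneg_left (huv x hx') (ha_nonneg x hx'.1))
        (mul_le_mul_of_nonneg_left (sqrt_le_sqrt (huv x hx')) (hb_nonneg x hx'.1))
    rw [div_le_iff₀ (by positivity)]
    nlinarith
  have hw_bound := le_of_hasDerivAt_le_mul_add (w := fun y => √(v y))
    (p := fun s => 1 / 2 * a s) (q := fun s => 1 / 2 * b s) ht
    (continuousOn_const.mul (ha_cont.mono hIcc)) (continuousOn_const.mul (hb_cont.mono hIcc))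
    (continuousOn_const.add (hf.continuousOn_primitive_of_Icc ht)).sqrt hw' hle
  simp only [v, integral_same, add_zero, intervalIntegral.integral_const_mul, mul_assoc]
    at hw_bound
  calc u t ≤ √(v t) ^ 2 := (sq_sqrt (hv_pos t ⟨ht, le_rfl⟩).le).symm ▸ huv t ⟨ht, le_rfl⟩
    _ ≤ _ := pow_le_pow_left₀ (sqrt_nonneg _) hw_bound 2

theorem perov_inequality_half {t₀ : ℝ} {c : ℝ} (hc : 0 ≤ c)
    (u a b : ℝ → ℝ)
    (hu_cont : ContinuousOn u (Set.Ici t₀))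
    (ha_cont : ContinuousOn a (Set.Ici t₀))
    (hb_cont : ContinuousOn b (Set.Ici t₀))
    (hu_nonneg : ∀ t ∈ Set.Ici t₀, 0 ≤ u t)
    (ha_nonneg : ∀ t ∈ Set.Ici t₀, 0 ≤ a t)
    (hb_nonneg : ∀ t ∈ Set.Ici t₀, 0 ≤ b t)
    (hineq : ∀ t ∈ Set.Ici t₀,
      u t ≤ c + ∫ s in t₀..t, (a s * u s + b s * Real.sqrt (u s))) :
    ∀ t ∈ Set.Ici t₀,
      u t ≤ (Real.sqrt c * Real.exp ((1 / 2) * ∫ s in t₀..t, a s)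
        + (1 / 2) * ∫ s in t₀..t, b s * Real.exp ((1 / 2) * ∫ r in s..t, a r)) ^ 2 := by
  intro t ht
  set E := exp ((1 / 2) * ∫ s in t₀..t, a s)
  set I := (1 / 2) * ∫ s in t₀..t, b s * exp ((1 / 2) * ∫ r in s..t, a r)
  have hε : ∀ ε > 0, u t ≤ (√(c + ε) * E + I) ^ 2 := fun ε hε =>
    perov_inequality_half_of_pos (by positivity) u a b hu_cont ha_cont hb_cont hu_nonneg ha_nonneg
      hb_nonneg (fun s hs => (hineq s hs).trans (by linarith)) t ht
  have hlim : Tendsto (fun ε => (√(c + ε) * E + I) ^ 2) (𝓝[>] 0) (𝓝 ((√c * E + I) ^ 2)) := by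
    have hcont : Continuous fun ε => (√(c + ε) * E + I) ^ 2 := by fun_prop
    simpa using (hcont.tendsto 0).mono_left nhdsWithin_le_nhds
  exact ge_of_tendsto hlim (eventually_nhdsWithin_of_forall hε)
end

section
/- (Stability of second order dynamical systems governed by cocoercive operators.) Let H be a real Hilbert space, γ > 0, and for each parameter λ let A_λ : H → H be α_λ-cocoercive with 1/α_λ < γ, and suppose ‖A_λ(u) − A(u)‖ ≤ L'·δ for all u ∈ H, where δ ≥ 0. If x and x_λ are C² solutions on [0,T] of x'' + γx' + A x = 0 with x(0)=u₀, x'(0)=v₀, and x_λ'' + γx_λ' + A_λ x_λ = 0 with x_λ(0)=u_{0,λ}, x_λ'(0)=v_{0,λ}, then for all t ∈ [0,T]: ‖x_λ(t) − x(t)‖ ≤ (1 + γ(2/(2+γT))²(e^{(2+γT)t/2} − 1 − t))‖u_{0,λ} − u₀‖ + (2/(2+γT))(e^{(2+γT)t/2} − 1)‖v_{0,λ} − v₀‖ + L'(2/(2+γT))²(e^{(2+γT)t/2} − 1 − t)·δ. -/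
/-!
The difference `e = x_λ - x` solves the damped equation `e'' + γ e' = -(A_λ x_λ - A x)`,
whose forcing is bounded by `L'δ + γ ‖e‖` because an `α_λ`-cocoercive operator is
`1/α_λ`-Lipschitz. An integrating factor for the damping gives
`‖e'(t)‖ ≤ ‖e'(0)‖ + ∫₀ᵗ (L'δ + γ ‖e‖)`, and together with `‖e(t)‖ ≤ ‖e(0)‖ + ∫₀ᵗ ‖e'‖` this is
an integral inequality whose extremal solution `ψ` solves `ψ'' = L'δ + γ ψ`; so `‖e‖ ≤ ψ`, by two
first-order Gronwall steps. Finally `cosh s ≤ exp (s² / 2)` and `γ t ≤ γ T` bound the hyperbolic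
functions in `ψ` by exponentials of rate `(2 + γ T) / 2`.
-/

open Real Set

lemma monotoneOn_Icc_of_hasDerivAt_nonneg {f f' : ℝ → ℝ} {a b : ℝ}
    (hf : ContinuousOn f (Icc a b)) (hf' : ∀ t ∈ Ioo a b, HasDerivAt f (f' t) t)
    (h : ∀ t ∈ Ioo a b, 0 ≤ f' t) : MonotoneOn f (Icc a b) :=
  monotoneOn_of_hasDerivWithinAt_nonneg (convex_Icc a b) hf
    (fun t ht => (hf' t (by rwa [interior_Icc] at ht)).hasDerivWithinAt)
    (fun t ht => h t (by rwa [interior_Icc] at ht))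

lemma le_of_hasDerivAt_le {f g f' g' : ℝ → ℝ} {t : ℝ} (ht : 0 ≤ t)
    (hf : ∀ s, HasDerivAt f (f' s) s) (hg : ∀ s, HasDerivAt g (g' s) s)
    (h0 : f 0 ≤ g 0) (h : ∀ s ∈ Ioo 0 t, f' s ≤ g' s) : f t ≤ g t := by
  have hmono : MonotoneOn (g - f) (Icc 0 t) :=
    monotoneOn_Icc_of_hasDerivAt_nonneg
      (fun s _ => ((hg s).sub (hf s)).continuousAt.continuousWithinAt)
      (fun s _ => (hg s).sub (hf s)) (fun s hs => sub_nonneg.2 (h s hs))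
  have := hmono (left_mem_Icc.2 ht) (right_mem_Icc.2 ht) ht
  simp only [Pi.sub_apply] at this
  linarith

lemma sinh_mul_div_le {μ ω t : ℝ} (hμ : 0 < μ) (hω : 0 < ω) (ht : 0 ≤ t)
    (hμt : μ ^ 2 * t ≤ 2 * ω) : sinh (μ * t) / μ ≤ (exp (ω * t) - 1) / ω := by
  refine le_of_hasDerivAt_le (f := fun s => sinh (μ * s) / μ) (g := fun s => (exp (ω * s) - 1) / ω)
    (f' := fun s => cosh (μ * s)) (g' := fun s => exp (ω * s)) ht
    (fun s => ?_) (fun s => ?_) (by simp) (fun s hs => ?_)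
  · exact ((((hasDerivAt_id' s).const_mul μ).sinh).div_const μ).congr_deriv (by field_simp)
  · exact (((((hasDerivAt_id' s).const_mul ω).exp).sub_const 1).div_const ω).congr_deriv
      (by field_simp)
  · have hs' : μ ^ 2 * s ≤ 2 * ω := le_trans (by nlinarith [hs.2]) hμt
    calc cosh (μ * s) ≤ exp ((μ * s) ^ 2 / 2) := cosh_le_exp_half_sq _
      _ ≤ exp (ω * s) := by
        gcongr
        nlinarith [mul_le_mul_of_nonneg_right hs' hs.1.le]

lemma cosh_mul_sub_one_div_le {μ ω t : ℝ} (hμ : 0 < μ) (hω : 1 ≤ ω) (ht : 0 ≤ t)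
    (hμt : μ ^ 2 * t ≤ 2 * ω) :
    (cosh (μ * t) - 1) / μ ^ 2 ≤ (exp (ω * t) - 1 - t) / ω ^ 2 := by
  have hω₀ : 0 < ω := by linarith
  refine le_of_hasDerivAt_le (f := fun s => (cosh (μ * s) - 1) / μ ^ 2)
    (g := fun s => (exp (ω * s) - 1 - s) / ω ^ 2) (f' := fun s => sinh (μ * s) / μ)
    (g' := fun s => (ω * exp (ω * s) - 1) / ω ^ 2) ht
    (fun s => ?_) (fun s => ?_) (by simp) (fun s hs => ?_)
  · exact (((((hasDerivAt_id' s).const_mul μ).cosh).sub_const 1).div_const (μ ^ 2)).congr_deriv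
      (by field_simp)
  · exact ((((((hasDerivAt_id' s).const_mul ω).exp).sub_const 1).sub
      (hasDerivAt_id' s)).div_const (ω ^ 2)).congr_deriv (by ring)
  · have hs' : μ ^ 2 * s ≤ 2 * ω := le_trans (by nlinarith [hs.2]) hμt
    calc sinh (μ * s) / μ ≤ (exp (ω * s) - 1) / ω := sinh_mul_div_le hμ hω₀ hs.1.le hs'
      _ ≤ (exp (ω * s) - 1) / ω + (ω - 1) / ω ^ 2 := by
        have : 0 ≤ (ω - 1) / ω ^ 2 := by positivity
        linarith
      _ = (ω * exp (ω * s) - 1) / ω ^ 2 := by field_simp; ring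

lemma nonpos_of_hasDerivAt_le_mul {f f' : ℝ → ℝ} {k T : ℝ} (hf : ContinuousOn f (Icc 0 T))
    (hf' : ∀ t ∈ Ioo 0 T, HasDerivAt f (f' t) t) (hle : ∀ t ∈ Ioo 0 T, f' t ≤ k * f t)
    (h0 : f 0 ≤ 0) : ∀ t ∈ Icc 0 T, f t ≤ 0 := by
  have hexp : ∀ t, HasDerivAt (fun s => exp (-k * s)) (exp (-k * t) * -k) t := fun t =>
    ((hasDerivAt_id' t).const_mul (-k)).exp.congr_deriv (by ring)
  have hmono : MonotoneOn (fun s => -(exp (-k * s) * f s)) (Icc 0 T) :=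
    monotoneOn_Icc_of_hasDerivAt_nonneg
      ((continuous_exp.comp (continuous_const.mul continuous_id)).continuousOn.mul hf).neg
      (fun t ht => ((hexp t).mul (hf' t ht)).neg)
      (fun t ht => by nlinarith [exp_pos (-k * t), hle t ht])
  intro t ht
  have := hmono (left_mem_Icc.2 (ht.1.trans ht.2)) ht ht.1
  simp only [mul_zero, exp_zero, one_mul, neg_le_neg_iff] at this
  nlinarith [exp_pos (-k * t)]

lemma nonpos_of_hasDerivAt_le_of_hasDerivAt_le_sq_mul {w w' v v' : ℝ → ℝ} {μ T : ℝ} (hμ : 0 ≤ μ)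
    (hw : ContinuousOn w (Icc 0 T)) (hv : ContinuousOn v (Icc 0 T))
    (hw' : ∀ t ∈ Ioo 0 T, HasDerivAt w (w' t) t) (hv' : ∀ t ∈ Ioo 0 T, HasDerivAt v (v' t) t)
    (hwv : ∀ t ∈ Ioo 0 T, w' t ≤ v t) (hvw : ∀ t ∈ Ioo 0 T, v' t ≤ μ ^ 2 * w t)
    (hw0 : w 0 ≤ 0) (hv0 : v 0 ≤ 0) : ∀ t ∈ Icc 0 T, w t ≤ 0 := by
  -- factor `d²/dt² - μ²` as `(d/dt + μ) ∘ (d/dt - μ)`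
  have hvw' : ∀ t ∈ Icc 0 T, v t + μ * w t ≤ 0 :=
    nonpos_of_hasDerivAt_le_mul (k := μ) (hv.add (continuousOn_const.mul hw))
      (fun t ht => (hv' t ht).add ((hw' t ht).const_mul μ))
      (fun t ht => by nlinarith [hvw t ht, mul_le_mul_of_nonneg_left (hwv t ht) hμ])
      (by nlinarith)
  exact nonpos_of_hasDerivAt_le_mul (k := -μ) hw hw'
    (fun t ht => by linarith [hwv t ht, hvw' t (Ioo_subset_Icc_self ht)]) hw0

lemma continuousOn_integral_of_continuousOn_Icc {f : ℝ → ℝ} {T : ℝ} (hT : 0 ≤ T)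
    (hf : ContinuousOn f (Icc 0 T)) : ContinuousOn (fun t => ∫ s in 0..t, f s) (Icc 0 T) := by
  rw [← uIcc_of_le hT] at hf ⊢
  exact intervalIntegral.continuousOn_primitive_interval (hf.integrableOn_compact isCompact_uIcc)

lemma hasDerivAt_integral_of_continuousOn_Icc {f : ℝ → ℝ} {T t : ℝ}
    (hf : ContinuousOn f (Icc 0 T)) (ht : t ∈ Ioo 0 T) :
    HasDerivAt (fun u => ∫ s in 0..u, f s) (f t) t :=
  intervalIntegral.integral_hasDerivAt_right
    ((hf.mono (Icc_subset_Icc_right ht.2.le)).intervalIntegrable_of_Icc ht.1.le)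
    ((hf.mono Ioo_subset_Icc_self).stronglyMeasurableAtFilter isOpen_Ioo t ht)
    (hf.continuousAt (Icc_mem_nhds ht.1 ht.2))

lemma le_cosh_sinh_bound_of_le_integral {p q r : ℝ → ℝ} {a b c μ T : ℝ} (hμ : 0 < μ)
    (hq : ContinuousOn q (Icc 0 T)) (hr : ContinuousOn r (Icc 0 T))
    (hpq : ∀ t ∈ Icc 0 T, p t ≤ a + ∫ s in 0..t, q s)
    (hqr : ∀ t ∈ Icc 0 T, q t ≤ b + ∫ s in 0..t, r s)
    (hrp : ∀ t ∈ Icc 0 T, r t ≤ c + μ ^ 2 * p t) :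
    ∀ t ∈ Icc 0 T,
      p t ≤ a + (μ ^ 2 * a + c) * ((cosh (μ * t) - 1) / μ ^ 2) + b * (sinh (μ * t) / μ) := by
  intro t ht
  have hT : 0 ≤ T := ht.1.trans ht.2
  set Ψ : ℝ → ℝ := fun t =>
    a + (μ ^ 2 * a + c) * ((cosh (μ * t) - 1) / μ ^ 2) + b * (sinh (μ * t) / μ)
  set Ψ' : ℝ → ℝ := fun t => (μ ^ 2 * a + c) * (sinh (μ * t) / μ) + b * cosh (μ * t)
  have hΨ : ∀ s, HasDerivAt Ψ (Ψ' s) s := fun s => by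
    have hμs := (hasDerivAt_id' s).const_mul μ
    exact (((hμs.cosh.sub_const 1).div_const (μ ^ 2)).const_mul _ |>.const_add a |>.add
      ((hμs.sinh.div_const μ).const_mul b)).congr_deriv (by simp only [Ψ']; field_simp)
  have hΨ' : ∀ s, HasDerivAt Ψ' (c + μ ^ 2 * Ψ s) s := fun s => by
    have hμs := (hasDerivAt_id' s).const_mul μ
    exact (((hμs.sinh.div_const μ).const_mul _).add (hμs.cosh.const_mul b)).congr_deriv
      (by simp only [Ψ]; field_simp; ring)
  have hWnonpos := nonpos_of_hasDerivAt_le_of_hasDerivAt_le_sq_mul hμ.le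
    (w := fun t => (a + ∫ s in 0..t, q s) - Ψ t) (v := fun t => (b + ∫ s in 0..t, r s) - Ψ' t)
    (w' := fun t => q t - Ψ' t) (v' := fun t => r t - (c + μ ^ 2 * Ψ t))
    ((continuousOn_const.add (continuousOn_integral_of_continuousOn_Icc hT hq)).sub
      (fun s _ => (hΨ s).continuousAt.continuousWithinAt))
    ((continuousOn_const.add (continuousOn_integral_of_continuousOn_Icc hT hr)).sub
      (fun s _ => (hΨ' s).continuousAt.continuousWithinAt))
    (fun s hs => ((hasDerivAt_integral_of_continuousOn_Icc hq hs).const_add a).sub (hΨ s))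
    (fun s hs => ((hasDerivAt_integral_of_continuousOn_Icc hr hs).const_add b).sub (hΨ' s))
    (fun s hs => by linarith [hqr s (Ioo_subset_Icc_self hs)])
    (fun s hs => by
      nlinarith [hrp s (Ioo_subset_Icc_self hs), hpq s (Ioo_subset_Icc_self hs)])
    (by simp [Ψ]) (by simp [Ψ'])
  linarith [hpq t ht, hWnonpos t ht]

lemma norm_le_add_integral_norm_of_hasDerivAt_neg_smul_sub {E : Type*} [NormedAddCommGroup E]
    [NormedSpace ℝ E] [CompleteSpace E] {v g : ℝ → E} {γ T : ℝ} (hγ : 0 ≤ γ)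
    (hv : ∀ t ∈ Icc 0 T, HasDerivAt v (-(γ • v t) - g t) t) (hg : ContinuousOn g (Icc 0 T)) :
    ∀ t ∈ Icc 0 T, ‖v t‖ ≤ ‖v 0‖ + ∫ s in 0..t, ‖g s‖ := by
  intro t ht
  have hsub : uIcc 0 t ⊆ Icc 0 T := by
    rw [uIcc_of_le ht.1]; exact Icc_subset_Icc_right ht.2
  have hexp_le : ∀ s ≤ t, exp (γ * (s - t)) ≤ 1 := fun s hs =>
    exp_le_one_iff.2 (mul_nonpos_of_nonneg_of_nonpos hγ (by linarith))
  -- the integrating factor `exp (γ (s - t))` removes the damping term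
  have hderiv : ∀ s ∈ uIcc 0 t, HasDerivAt (fun s => exp (γ * (s - t)) • v s)
      (-(exp (γ * (s - t)) • g s)) s := fun s hs => by
    have hexp : HasDerivAt (fun s => exp (γ * (s - t))) (exp (γ * (s - t)) * γ) s :=
      (((hasDerivAt_id' s).sub_const t).const_mul γ).exp.congr_deriv (by ring)
    exact (hexp.smul (hv s (hsub hs))).congr_deriv (by module)
  have hint : IntervalIntegrable (fun s => -(exp (γ * (s - t)) • g s)) MeasureTheory.volume 0 t :=
    ((((continuous_exp.comp ((continuous_sub_right t).const_mul γ)).continuousOn).smul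
      (hg.mono hsub)).neg).intervalIntegrable
  have hv_eq : v t = exp (γ * (0 - t)) • v 0 + ∫ s in 0..t, -(exp (γ * (s - t)) • g s) := by
    rw [intervalIntegral.integral_eq_sub_of_hasDerivAt hderiv hint]
    simp
  have hinit : ‖exp (γ * (0 - t)) • v 0‖ ≤ ‖v 0‖ := by
    rw [norm_smul, norm_of_nonneg (exp_pos _).le]
    exact mul_le_of_le_one_left (norm_nonneg _) (hexp_le 0 ht.1)
  have hforce : ‖∫ s in 0..t, -(exp (γ * (s - t)) • g s)‖ ≤ ∫ s in 0..t, ‖g s‖ := by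
    refine intervalIntegral.norm_integral_le_of_norm_le ht.1
      (Filter.Eventually.of_forall fun s hs => ?_) (hg.mono hsub).norm.intervalIntegrable
    rw [norm_neg, norm_smul, norm_of_nonneg (exp_pos _).le]
    exact mul_le_of_le_one_left (norm_nonneg _) (hexp_le s hs.2)
  calc ‖v t‖ ≤ ‖exp (γ * (0 - t)) • v 0‖ + ‖∫ s in 0..t, -(exp (γ * (s - t)) • g s)‖ :=
        hv_eq ▸ norm_add_le _ _
    _ ≤ ‖v 0‖ + ∫ s in 0..t, ‖g s‖ := add_le_add hinit hforce

lemma norm_sub_le_of_hasDerivAt_damped {E : Type*} [NormedAddCommGroup E] [NormedSpace ℝ E]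
    [CompleteSpace E] {x x' y y' f g : ℝ → E} {γ μ c T : ℝ} (hγ : 0 ≤ γ) (hμ : 0 < μ)
    (hx : ∀ t ∈ Icc 0 T, HasDerivAt x (x' t) t)
    (hx' : ∀ t ∈ Icc 0 T, HasDerivAt x' (-(γ • x' t) - f t) t)
    (hy : ∀ t ∈ Icc 0 T, HasDerivAt y (y' t) t)
    (hy' : ∀ t ∈ Icc 0 T, HasDerivAt y' (-(γ • y' t) - g t) t)
    (hfg : ContinuousOn (fun t => f t - g t) (Icc 0 T))
    (hfg_le : ∀ t ∈ Icc 0 T, ‖f t - g t‖ ≤ c + μ ^ 2 * ‖x t - y t‖) :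
    ∀ t ∈ Icc 0 T, ‖x t - y t‖ ≤ ‖x 0 - y 0‖
      + (μ ^ 2 * ‖x 0 - y 0‖ + c) * ((cosh (μ * t) - 1) / μ ^ 2)
      + ‖x' 0 - y' 0‖ * (sinh (μ * t) / μ) := by
  have hpos := norm_le_add_integral_norm_of_hasDerivAt_neg_smul_sub le_rfl
    (v := fun t => x t - y t) (g := fun t => -(x' t - y' t))
    (fun t ht => ((hx t ht).sub (hy t ht)).congr_deriv (by simp))
    ((HasDerivAt.continuousOn hx').sub (HasDerivAt.continuousOn hy')).neg
  have hvel := norm_le_add_integral_norm_of_hasDerivAt_neg_smul_sub hγ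
    (v := fun t => x' t - y' t) (g := fun t => f t - g t)
    (fun t ht => ((hx' t ht).sub (hy' t ht)).congr_deriv (by simp only [smul_sub]; abel)) hfg
  exact le_cosh_sinh_bound_of_le_integral (p := fun t => ‖x t - y t‖)
    (q := fun t => ‖x' t - y' t‖) (r := fun t => ‖f t - g t‖) hμ
    ((HasDerivAt.continuousOn hx').sub (HasDerivAt.continuousOn hy')).norm hfg.norm
    (fun t ht => by simpa only [norm_neg] using hpos t ht) hvel hfg_le

section Cocoercive

variable {H : Type*} [NormedAddCommGroup H] [InnerProductSpace ℝ H] {B : H → H} {β : ℝ}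

lemma mul_norm_sub_le_of_cocoercive
    (hB : ∀ u v : H, (inner ℝ (B u - B v) (u - v) : ℝ) ≥ β * ‖B u - B v‖ ^ 2) (u v : H) :
    β * ‖B u - B v‖ ≤ ‖u - v‖ := by
  rcases (norm_nonneg (B u - B v)).eq_or_lt with h | h
  · rw [← h, mul_zero]; exact norm_nonneg _
  · have := (hB u v).le.trans (real_inner_le_norm _ _)
    nlinarith

lemma norm_sub_le_of_cocoercive {L : ℝ} (hβ : 0 < β) (hβL : 1 / β ≤ L)
    (hB : ∀ u v : H, (inner ℝ (B u - B v) (u - v) : ℝ) ≥ β * ‖B u - B v‖ ^ 2) (u v : H) :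
    ‖B u - B v‖ ≤ L * ‖u - v‖ := by
  have hL : 0 ≤ L := (one_div_pos.2 hβ).le.trans hβL
  rw [div_le_iff₀ hβ] at hβL
  nlinarith [norm_nonneg (B u - B v),
    mul_le_mul_of_nonneg_left (mul_norm_sub_le_of_cocoercive hB u v) hL]

lemma continuous_of_cocoercive (hβ : 0 < β)
    (hB : ∀ u v : H, (inner ℝ (B u - B v) (u - v) : ℝ) ≥ β * ‖B u - B v‖ ^ 2) :
    Continuous B :=
  (LipschitzWith.of_dist_le_mul fun u v => by
    rw [dist_eq_norm, dist_eq_norm, Real.coe_toNNReal _ (one_div_pos.2 hβ).le]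
    exact norm_sub_le_of_cocoercive hβ le_rfl hB u v).continuous

end Cocoercive

theorem cocoercive_dynamical_system_stability_general {H : Type*} [NormedAddCommGroup H]
    [InnerProductSpace ℝ H] [CompleteSpace H]
    {T γ α αl L' δ : ℝ}
    (hγ : 0 < γ) (hα : 0 < α) (hαl : 0 < αl)
    (A Al : H → H)
    (hA_coco : ∀ u v : H, (inner ℝ (A u - A v) (u - v) : ℝ) ≥ α * ‖A u - A v‖ ^ 2)
    (hAl_coco : ∀ u v : H, (inner ℝ (Al u - Al v) (u - v) : ℝ) ≥ αl * ‖Al u - Al v‖ ^ 2)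
    (hαlγ : 1 / αl < γ)
    (hparam : ∀ u : H, ‖Al u - A u‖ ≤ L' * δ)
    (u₀ v₀ u₀l v₀l : H)
    (x x' xl xl' : ℝ → H)
    (hx : ∀ t ∈ Set.Icc (0 : ℝ) T, HasDerivAt x (x' t) t)
    (hx' : ∀ t ∈ Set.Icc (0 : ℝ) T, HasDerivAt x' (-(γ • x' t) - A (x t)) t)
    (hx0 : x 0 = u₀) (hx'0 : x' 0 = v₀)
    (hxl : ∀ t ∈ Set.Icc (0 : ℝ) T, HasDerivAt xl (xl' t) t)
    (hxl' : ∀ t ∈ Set.Icc (0 : ℝ) T, HasDerivAt xl' (-(γ • xl' t) - Al (xl t)) t)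
    (hxl0 : xl 0 = u₀l) (hxl'0 : xl' 0 = v₀l) :
    ∀ t ∈ Set.Icc (0 : ℝ) T,
      ‖xl t - x t‖ ≤
        (1 + γ * (2 / (2 + γ * T)) ^ 2
            * (Real.exp ((2 + γ * T) * t / 2) - 1 - t)) * ‖u₀l - u₀‖
        + (2 / (2 + γ * T)) * (Real.exp ((2 + γ * T) * t / 2) - 1) * ‖v₀l - v₀‖
        + L' * (2 / (2 + γ * T)) ^ 2
            * (Real.exp ((2 + γ * T) * t / 2) - 1 - t) * δ := by
  have hμ : 0 < √γ := sqrt_pos.2 hγ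
  have hμ2 : √γ ^ 2 = γ := sq_sqrt hγ.le
  have hAl_lip := norm_sub_le_of_cocoercive hαl hαlγ.le hAl_coco
  have hforce : ∀ t ∈ Icc 0 T, ‖Al (xl t) - A (x t)‖ ≤ L' * δ + √γ ^ 2 * ‖xl t - x t‖ :=
    fun t _ => calc
      ‖Al (xl t) - A (x t)‖ ≤ ‖Al (xl t) - Al (x t)‖ + ‖Al (x t) - A (x t)‖ :=
        norm_sub_le_norm_sub_add_norm_sub _ _ _
      _ ≤ L' * δ + √γ ^ 2 * ‖xl t - x t‖ := by
        rw [hμ2]; linarith [hAl_lip (xl t) (x t), hparam (x t)]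
  have hbound := norm_sub_le_of_hasDerivAt_damped hγ.le hμ hxl hxl' hx hx'
    (((continuous_of_cocoercive hαl hAl_coco).comp_continuousOn (HasDerivAt.continuousOn hxl)).sub
      ((continuous_of_cocoercive hα hA_coco).comp_continuousOn (HasDerivAt.continuousOn hx)))
    hforce
  intro t ht
  set ω := (2 + γ * T) / 2 with hω_def
  have hω : 1 ≤ ω := by nlinarith [ht.1.trans ht.2]
  have hμt : √γ ^ 2 * t ≤ 2 * ω := by rw [hμ2]; nlinarith [ht.1, ht.2]
  have hc : 0 ≤ L' * δ := (norm_nonneg _).trans (hparam 0)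
  have h := hbound t ht
  rw [hxl0, hx0, hxl'0, hx'0] at h
  calc ‖xl t - x t‖
    _ ≤ ‖u₀l - u₀‖ + (√γ ^ 2 * ‖u₀l - u₀‖ + L' * δ) * ((cosh (√γ * t) - 1) / √γ ^ 2)
        + ‖v₀l - v₀‖ * (sinh (√γ * t) / √γ) := h
    _ ≤ ‖u₀l - u₀‖ + (√γ ^ 2 * ‖u₀l - u₀‖ + L' * δ) * ((exp (ω * t) - 1 - t) / ω ^ 2)
        + ‖v₀l - v₀‖ * ((exp (ω * t) - 1) / ω) := by
      gcongr _ + _ * ?_ + _ * ?_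
      · exact cosh_mul_sub_one_div_le hμ hω ht.1 hμt
      · exact sinh_mul_div_le hμ (by linarith) ht.1 hμt
    _ = _ := by
      rw [hμ2, show (2 + γ * T) * t / 2 = ω * t by ring,
        show 2 / (2 + γ * T) = 1 / ω by rw [hω_def]; field_simp]
      field_simp
      ring

theorem cocoercive_dynamical_system_stability {H : Type*} [NormedAddCommGroup H]
    [InnerProductSpace ℝ H] [CompleteSpace H]
    {T γ α αl L' δ : ℝ}
    (hT : 0 < T) (hγ : 0 < γ) (hα : 0 < α) (hαl : 0 < αl)
    (hL' : 0 < L') (hδ : 0 ≤ δ)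
    (A Al : H → H)
    (hA_coco : ∀ u v : H, (inner ℝ (A u - A v) (u - v) : ℝ) ≥ α * ‖A u - A v‖ ^ 2)
    (hAl_coco : ∀ u v : H, (inner ℝ (Al u - Al v) (u - v) : ℝ) ≥ αl * ‖Al u - Al v‖ ^ 2)
    (hαγ : 1 / α < γ) (hαlγ : 1 / αl < γ)
    (hparam : ∀ u : H, ‖Al u - A u‖ ≤ L' * δ)
    (u₀ v₀ u₀l v₀l : H)
    (x x' xl xl' : ℝ → H)
    (hx : ∀ t ∈ Set.Icc (0 : ℝ) T, HasDerivAt x (x' t) t)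
    (hx' : ∀ t ∈ Set.Icc (0 : ℝ) T, HasDerivAt x' (-(γ • x' t) - A (x t)) t)
    (hx0 : x 0 = u₀) (hx'0 : x' 0 = v₀)
    (hxl : ∀ t ∈ Set.Icc (0 : ℝ) T, HasDerivAt xl (xl' t) t)
    (hxl' : ∀ t ∈ Set.Icc (0 : ℝ) T, HasDerivAt xl' (-(γ • xl' t) - Al (xl t)) t)
    (hxl0 : xl 0 = u₀l) (hxl'0 : xl' 0 = v₀l) :
    ∀ t ∈ Set.Icc (0 : ℝ) T,
      ‖xl t - x t‖ ≤
        (1 + γ * (2 / (2 + γ * T)) ^ 2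
            * (Real.exp ((2 + γ * T) * t / 2) - 1 - t)) * ‖u₀l - u₀‖
        + (2 / (2 + γ * T)) * (Real.exp ((2 + γ * T) * t / 2) - 1) * ‖v₀l - v₀‖
        + L' * (2 / (2 + γ * T)) ^ 2
            * (Real.exp ((2 + γ * T) * t / 2) - 1 - t) * δ :=
  cocoercive_dynamical_system_stability_general hγ hα hαl A Al hA_coco hAl_coco hαlγ hparam u₀ v₀
    u₀l v₀l x x' xl xl' hx hx' hx0 hx'0 hxl hxl' hxl0 hxl'0
end

section
/- (Stability for RLC-type second order ODE.) Let τ > 0, β > 0, L' > 0, δ ≥ 0, and L = max(β, τ). Suppose g, g_λ : [0,1] × ℝ → ℝ are continuous, β-Lipschitz in the second variable, and satisfy |g(t,x) − g_λ(t,x)| ≤ L'·δ for all (t,x). If x solves x'' + τx' = g(t,x) on [0,1] with x(0) = x'(0) = 0, and x_λ solves x_λ'' + τx_λ' = g_λ(t,x_λ) with x_λ(0) = x_{0,λ}, x_λ'(0) = ẋ_{0,λ}, then for all t ∈ [0,1]: |x_λ(t) − x(t)| ≤ (1 + L(2/(2+L))²(e^{(2+L)t/2} − 1 − t))|x_{0,λ}|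 + (2/(2+L))(e^{(2+L)t/2} − 1)|ẋ_{0,λ}| + L'(2/(2+L))²(e^{(2+L)t/2} − 1 − t)·δ. -/
/-!
Write `e = x_λ - x` and `w = e'`. Then `w' + τ w = g_λ(t, x_λ) - g(t, x)`, whose modulus is at
most `L |e| + L' δ`, and the integrating factor `exp (τ t)` shows that the damping can only shrink
`|w|`. Hence `u = |e|` and `v = |w|` satisfy `u ≤ |x_{0,λ}| + ∫ v` and
`v ≤ |ẋ_{0,λ}| + ∫ (L u + L' δ)`. For `c = (2 + L) / 2` we have `c ≥ 1` and `c² ≥ L`, which makes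
the claimed bound `Φ` together with `Φ'` a supersolution of the same pair of integral inequalities;
Grönwall's lemma applied to the positive parts of `u - Φ` and `v - Φ'` gives `u ≤ Φ`.
-/

open Set Real intervalIntegral Topology

lemma ContinuousOn.intervalIntegrable_of_mem_Icc {f : ℝ → ℝ} {a b t : ℝ}
    (hf : ContinuousOn f (Icc a b)) (ht : t ∈ Icc a b) :
    IntervalIntegrable f MeasureTheory.volume a t :=
  (hf.mono (Icc_subset_Icc_right ht.2)).intervalIntegrable_of_Icc ht.1

lemma abs_le_abs_add_integral_of_hasDerivAt_damped {f G : ℝ → ℝ} {τ t : ℝ} (hτ : 0 ≤ τ)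
    (ht : 0 ≤ t) (hf : ∀ s ∈ Icc 0 t, HasDerivAt f (G s - τ * f s) s)
    (hG : ContinuousOn G (Icc 0 t)) :
    |f t| ≤ |f 0| + ∫ s in 0..t, |G s| := by
  have hW : ∀ s ∈ uIcc 0 t, HasDerivAt (fun r => exp (τ * r) * f r) (exp (τ * s) * G s) s := by
    intro s hs
    rw [uIcc_of_le ht] at hs
    refine (((hasDerivAt_id' s).const_mul τ).exp.mul (hf s hs)).congr_deriv ?_
    ring
  have hWint : IntervalIntegrable (fun s => exp (τ * s) * G s) MeasureTheory.volume 0 t :=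
    ((continuousOn_const.mul continuousOn_id).rexp.mul hG).intervalIntegrable_of_Icc ht
  have hE : 1 ≤ exp (τ * t) := one_le_exp (mul_nonneg hτ ht)
  have hbound : exp (τ * t) * |f t| ≤ |f 0| + exp (τ * t) * ∫ s in 0..t, |G s| :=
    calc exp (τ * t) * |f t| = |f 0 + ∫ s in 0..t, exp (τ * s) * G s| := by
          rw [integral_eq_sub_of_hasDerivAt hW hWint, mul_zero, exp_zero, one_mul,
            add_sub_cancel, abs_mul, abs_of_pos (exp_pos _)]
      _ ≤ |f 0| + ∫ s in 0..t, |exp (τ * s) * G s| :=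
          (abs_add_le _ _).trans (add_le_add_right (abs_integral_le_integral_abs ht) _)
      _ ≤ |f 0| + ∫ s in 0..t, exp (τ * t) * |G s| := by
          gcongr
          refine integral_mono_on ht hWint.abs
            ((continuousOn_const.mul hG.abs).intervalIntegrable_of_Icc ht) fun s hs => ?_
          rw [abs_mul, abs_of_pos (exp_pos _)]
          gcongr
          exact hs.2
      _ = |f 0| + exp (τ * t) * ∫ s in 0..t, |G s| := by rw [integral_const_mul]
  refine le_of_mul_le_mul_left (hbound.trans ?_) (exp_pos (τ * t))
  rw [mul_add]
  gcongr
  exact le_mul_of_one_le_left (abs_nonneg _) hE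

lemma abs_sub_le_abs_sub_add_integral_of_hasDerivAt_damped {y z G H k : ℝ → ℝ} {τ T : ℝ}
    (hτ : 0 ≤ τ) (hy : ∀ s ∈ Icc 0 T, HasDerivAt y (G s - τ * y s) s)
    (hz : ∀ s ∈ Icc 0 T, HasDerivAt z (H s - τ * z s) s)
    (hG : ContinuousOn G (Icc 0 T)) (hH : ContinuousOn H (Icc 0 T))
    (hk : ContinuousOn k (Icc 0 T)) (hGH : ∀ s ∈ Icc 0 T, |G s - H s| ≤ k s) :
    ∀ t ∈ Icc 0 T, |y t - z t| ≤ |y 0 - z 0| + ∫ s in 0..t, k s := by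
  intro t ht
  have hsub : Icc 0 t ⊆ Icc 0 T := Icc_subset_Icc_right ht.2
  refine (abs_le_abs_add_integral_of_hasDerivAt_damped (f := fun s => y s - z s)
    (G := fun s => G s - H s) hτ ht.1
    (fun s hs => ((hy s (hsub hs)).sub (hz s (hsub hs))).congr_deriv (by ring))
    ((hG.sub hH).mono hsub)).trans (add_le_add_right ?_ _)
  exact integral_mono_on ht.1 ((hG.sub hH).abs.intervalIntegrable_of_mem_Icc ht)
    (hk.intervalIntegrable_of_mem_Icc ht) fun s hs => hGH s (hsub hs)

lemma hasDerivWithinAt_integral_Ici {f : ℝ → ℝ} {a b x : ℝ} (hf : ContinuousOn f (Icc a b))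
    (hx : x ∈ Ico a b) : HasDerivWithinAt (fun t => ∫ s in a..t, f s) (f x) (Ici x) x := by
  have hIcc : Icc a b ∈ 𝓝[>] x := Filter.mem_of_superset (Ioo_mem_nhdsGT hx.2)
    (Ioo_subset_Icc_self.trans (Icc_subset_Icc_left hx.1))
  exact integral_hasDerivWithinAt_right (hf.intervalIntegrable_of_mem_Icc (Ico_subset_Icc_self hx))
    ⟨Icc a b, hIcc, hf.aestronglyMeasurable measurableSet_Icc⟩
    ((hf x (Ico_subset_Icc_self hx)).mono_of_mem_nhdsWithin hIcc)

lemma eq_zero_of_le_mul_integral {N : ℝ → ℝ} {K T : ℝ} (hN : ContinuousOn N (Icc 0 T))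
    (hN0 : ∀ t ∈ Icc 0 T, 0 ≤ N t) (hle : ∀ t ∈ Icc 0 T, N t ≤ K * ∫ s in 0..t, N s) :
    ∀ t ∈ Icc 0 T, N t = 0 := by
  set F : ℝ → ℝ := fun t => ∫ s in 0..t, N s
  have hF0 : ∀ t ∈ Icc 0 T, 0 ≤ F t := fun t ht =>
    integral_nonneg ht.1 fun s hs => hN0 s (Icc_subset_Icc_right ht.2 hs)
  have hFcont : ContinuousOn F (Icc 0 T) := by
    rcases le_or_gt 0 T with hT | hT
    · rw [← uIcc_of_le hT] at hN ⊢
      exact continuousOn_primitive_interval (hN.integrableOn_compact isCompact_uIcc)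
    · simp [Icc_eq_empty_of_lt hT]
  have hF : ∀ t ∈ Icc 0 T, F t = 0 :=
    eq_zero_of_abs_deriv_le_mul_abs_self_of_eq_zero_right hFcont
      (fun x hx => hasDerivWithinAt_integral_Ici hN hx) integral_same fun x hx => by
        rw [Real.norm_of_nonneg (hN0 x (Ico_subset_Icc_self hx)),
          Real.norm_of_nonneg (hF0 x (Ico_subset_Icc_self hx))]
        exact hle x (Ico_subset_Icc_self hx)
  intro t ht
  exact le_antisymm (by simpa [F, hF t ht] using hle t ht) (hN0 t ht)

lemma nonpos_of_le_integral_of_le_mul_integral {p q : ℝ → ℝ} {L T : ℝ} (hL : 0 ≤ L)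
    (hp : ContinuousOn p (Icc 0 T)) (hq : ContinuousOn q (Icc 0 T))
    (hpq : ∀ t ∈ Icc 0 T, p t ≤ ∫ s in 0..t, q s)
    (hqp : ∀ t ∈ Icc 0 T, q t ≤ L * ∫ s in 0..t, p s) :
    ∀ t ∈ Icc 0 T, p t ≤ 0 := by
  set P : ℝ → ℝ := fun s => max (p s) 0
  set Q : ℝ → ℝ := fun s => max (q s) 0
  have hP : ContinuousOn P (Icc 0 T) := hp.sup continuousOn_const
  have hQ : ContinuousOn Q (Icc 0 T) := hq.sup continuousOn_const
  have hPQ : ∀ t ∈ Icc 0 T, P t + Q t ≤ (1 + L) * ∫ s in 0..t, (P s + Q s) := by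
    intro t ht
    have hpP : ∫ s in 0..t, p s ≤ ∫ s in 0..t, P s := integral_mono_on ht.1
      (hp.intervalIntegrable_of_mem_Icc ht) (hP.intervalIntegrable_of_mem_Icc ht)
      fun s _ => le_max_left _ _
    have hqQ : ∫ s in 0..t, q s ≤ ∫ s in 0..t, Q s := integral_mono_on ht.1
      (hq.intervalIntegrable_of_mem_Icc ht) (hQ.intervalIntegrable_of_mem_Icc ht)
      fun s _ => le_max_left _ _
    have hP0 : 0 ≤ ∫ s in 0..t, P s := integral_nonneg ht.1 fun s _ => le_max_right _ _
    have hQ0 : 0 ≤ ∫ s in 0..t, Q s := integral_nonneg ht.1 fun s _ => le_max_right _ _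
    have hPt : P t ≤ ∫ s in 0..t, Q s := max_le ((hpq t ht).trans hqQ) hQ0
    have hQt : Q t ≤ L * ∫ s in 0..t, P s :=
      max_le ((hqp t ht).trans (mul_le_mul_of_nonneg_left hpP hL)) (mul_nonneg hL hP0)
    rw [integral_add (hP.intervalIntegrable_of_mem_Icc ht) (hQ.intervalIntegrable_of_mem_Icc ht)]
    nlinarith
  have hzero := eq_zero_of_le_mul_integral (hP.add hQ)
    (fun t _ => add_nonneg (le_max_right _ _) (le_max_right _ _)) hPQ
  intro t ht
  have hPt : P t = 0 := by
    have hPQt := hzero t ht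
    simp only [Pi.add_apply] at hPQt
    linarith [le_max_right (p t) 0, le_max_right (q t) 0]
  exact hPt ▸ le_max_left (p t) 0

lemma le_of_integral_supersolution {u v Φ Ψ : ℝ → ℝ} {A B C L T : ℝ} (hL : 0 ≤ L)
    (hu : ContinuousOn u (Icc 0 T)) (hv : ContinuousOn v (Icc 0 T))
    (hΦ : ContinuousOn Φ (Icc 0 T)) (hΨ : ContinuousOn Ψ (Icc 0 T))
    (huv : ∀ t ∈ Icc 0 T, u t ≤ A + ∫ s in 0..t, v s)
    (hvu : ∀ t ∈ Icc 0 T, v t ≤ B + ∫ s in 0..t, (L * u s + C))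
    (hΦΨ : ∀ t ∈ Icc 0 T, A + ∫ s in 0..t, Ψ s = Φ t)
    (hΨΦ : ∀ t ∈ Icc 0 T, B + ∫ s in 0..t, (L * Φ s + C) ≤ Ψ t) :
    ∀ t ∈ Icc 0 T, u t ≤ Φ t := by
  have key := nonpos_of_le_integral_of_le_mul_integral (p := fun s => u s - Φ s)
    (q := fun s => v s - Ψ s) hL (hu.sub hΦ) (hv.sub hΨ)
    (fun t ht => by
      rw [integral_sub (hv.intervalIntegrable_of_mem_Icc ht)
        (hΨ.intervalIntegrable_of_mem_Icc ht)]
      linarith [huv t ht, hΦΨ t ht])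
    (fun t ht => by
      have hLu : ContinuousOn (fun s => L * u s + C) (Icc 0 T) := by fun_prop
      have hLΦ : ContinuousOn (fun s => L * Φ s + C) (Icc 0 T) := by fun_prop
      calc v t - Ψ t ≤ (∫ s in 0..t, (L * u s + C)) - ∫ s in 0..t, (L * Φ s + C) := by
            linarith [hvu t ht, hΨΦ t ht]
        _ = ∫ s in 0..t, L * (u s - Φ s) := by
            rw [← integral_sub (hLu.intervalIntegrable_of_mem_Icc ht)
              (hLΦ.intervalIntegrable_of_mem_Icc ht)]
            ring_nf
        _ = L * ∫ s in 0..t, (u s - Φ s) := integral_const_mul _ _)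
  exact fun t ht => sub_nonpos.1 (key t ht)

/-- The solution of `Φ'' = (D + c B) exp (c t)` with `Φ 0 = A` and `Φ' 0 = B + D (c - 1) / c²`. -/
noncomputable def secondOrderBound (c A B D t : ℝ) : ℝ :=
  A + D * (exp (c * t) - 1 - t) / c ^ 2 + B * (exp (c * t) - 1) / c

noncomputable def secondOrderBoundDeriv (c B D t : ℝ) : ℝ :=
  D * (c * exp (c * t) - 1) / c ^ 2 + B * exp (c * t)

section secondOrderBound

variable {c A B D : ℝ}

lemma continuous_secondOrderBound : Continuous (secondOrderBound c A B D) := by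
  unfold secondOrderBound
  fun_prop

lemma continuous_secondOrderBoundDeriv : Continuous (secondOrderBoundDeriv c B D) := by
  unfold secondOrderBoundDeriv
  fun_prop

lemma hasDerivAt_secondOrderBound (hc : c ≠ 0) (t : ℝ) :
    HasDerivAt (secondOrderBound c A B D) (secondOrderBoundDeriv c B D t) t := by
  have hexp := (hasDerivAt_id' t).const_mul c |>.exp
  refine ((((((hexp.sub_const 1).sub (hasDerivAt_id' t)).const_mul D).div_const (c ^ 2))
    |>.const_add A)
    |>.add (((hexp.sub_const 1).const_mul B).div_const c)).congr_deriv ?_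
  unfold secondOrderBoundDeriv
  field_simp

lemma hasDerivAt_secondOrderBoundDeriv (hc : c ≠ 0) (t : ℝ) :
    HasDerivAt (secondOrderBoundDeriv c B D) ((D + c * B) * exp (c * t)) t := by
  have hexp := (hasDerivAt_id' t).const_mul c |>.exp
  refine ((((hexp.const_mul c).sub_const 1).const_mul D).div_const (c ^ 2)
    |>.add (hexp.const_mul B)).congr_deriv ?_
  field_simp

lemma add_integral_secondOrderBoundDeriv (hc : c ≠ 0) (t : ℝ) :
    A + ∫ s in 0..t, secondOrderBoundDeriv c B D s = secondOrderBound c A B D t := by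
  rw [integral_eq_sub_of_hasDerivAt (fun s _ => hasDerivAt_secondOrderBound (A := A) hc s)
    (continuous_secondOrderBoundDeriv.intervalIntegrable 0 t)]
  simp [secondOrderBound]

lemma add_integral_le_secondOrderBoundDeriv {L C t : ℝ} (hc : 1 ≤ c) (hLc : L ≤ c ^ 2)
    (hB : 0 ≤ B) (hD : 0 ≤ D) (hLAC : L * A + C ≤ D) (ht : 0 ≤ t) :
    B + ∫ s in 0..t, (L * secondOrderBound c A B D s + C) ≤ secondOrderBoundDeriv c B D t := by
  have hc0 : c ≠ 0 := by positivity
  have hΨ' : ∀ s, 0 ≤ s → L * secondOrderBound c A B D s + C ≤ (D + c * B) * exp (c * s) := by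
    intro s hs
    have hE : 1 + c * s ≤ exp (c * s) := by linarith [add_one_le_exp (c * s)]
    have hc2 : 0 < c ^ 2 := by positivity
    have hE1 : 0 ≤ exp (c * s) - 1 := by nlinarith
    have hEs : 0 ≤ exp (c * s) - 1 - s := by nlinarith
    have h1 : L * (D * (exp (c * s) - 1 - s) / c ^ 2) ≤ D * (exp (c * s) - 1 - s) := by
      rw [← mul_div_assoc, div_le_iff₀ hc2]
      linear_combination mul_le_mul_of_nonneg_right hLc (mul_nonneg hD hEs)
    have h2 : L * (B * (exp (c * s) - 1) / c) ≤ c * (B * (exp (c * s) - 1)) := by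
      rw [← mul_div_assoc, div_le_iff₀ (by positivity)]
      linear_combination mul_le_mul_of_nonneg_right hLc (mul_nonneg hB hE1)
    unfold secondOrderBound
    nlinarith
  have hint := integral_le_sub_of_hasDeriv_right_of_le
    (φ := fun s => L * secondOrderBound c A B D s + C) ht
    continuous_secondOrderBoundDeriv.continuousOn
    (fun s _ => (hasDerivAt_secondOrderBoundDeriv hc0 s).hasDerivWithinAt)
    ((continuous_const.mul continuous_secondOrderBound).add continuous_const).integrableOn_Icc
    (fun s hs => hΨ' s hs.1.le)
  have hΨ0 : B ≤ secondOrderBoundDeriv c B D 0 := by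
    simp only [secondOrderBoundDeriv, mul_zero, exp_zero, mul_one]
    have : 0 ≤ D * (c - 1) / c ^ 2 := by have := sub_nonneg.2 hc; positivity
    linarith
  linarith

end secondOrderBound

lemma abs_sub_le_mul_abs_sub_add_of_lipschitz {g gl : ℝ → ℝ → ℝ} {β L ε : ℝ} (hβL : β ≤ L)
    (hgl_lip : ∀ t x x', |gl t x - gl t x'| ≤ β * |x - x'|) (hparam : ∀ t x, |g t x - gl t x| ≤ ε)
    (t a b : ℝ) : |gl t a - g t b| ≤ L * |a - b| + ε :=
  calc |gl t a - g t b| ≤ |gl t a - gl t b| + |g t b - gl t b| := by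
        rw [abs_sub_comm (g t b)]; exact abs_sub_le _ _ _
    _ ≤ L * |a - b| + ε := by
        gcongr
        · exact (hgl_lip t a b).trans (by gcongr)
        · exact hparam t b

theorem rlc_stability_general {τ β L' δ : ℝ}
    (hτ : 0 < τ)
    (L : ℝ) (hLdef : L = max β τ)
    (g gl : ℝ → ℝ → ℝ)
    (hg_cont : Continuous fun p : ℝ × ℝ => g p.1 p.2)
    (hgl_cont : Continuous fun p : ℝ × ℝ => gl p.1 p.2)
    (hgl_lip : ∀ t x x', |gl t x - gl t x'| ≤ β * |x - x'|)
    (hparam : ∀ t x, |g t x - gl t x| ≤ L' * δ)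
    (x₀l xd₀l : ℝ)
    (x x' xl xl' : ℝ → ℝ)
    (hx : ∀ t ∈ Set.Icc (0 : ℝ) 1, HasDerivAt x (x' t) t)
    (hx' : ∀ t ∈ Set.Icc (0 : ℝ) 1, HasDerivAt x' (g t (x t) - τ * x' t) t)
    (hx0 : x 0 = 0) (hx'0 : x' 0 = 0)
    (hxl : ∀ t ∈ Set.Icc (0 : ℝ) 1, HasDerivAt xl (xl' t) t)
    (hxl' : ∀ t ∈ Set.Icc (0 : ℝ) 1, HasDerivAt xl' (gl t (xl t) - τ * xl' t) t)
    (hxl0 : xl 0 = x₀l) (hxl'0 : xl' 0 = xd₀l) :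
    ∀ t ∈ Set.Icc (0 : ℝ) 1,
      |xl t - x t| ≤
        (1 + L * (2 / (2 + L)) ^ 2 * (Real.exp ((2 + L) * t / 2) - 1 - t)) * |x₀l|
        + (2 / (2 + L)) * (Real.exp ((2 + L) * t / 2) - 1) * |xd₀l|
        + L' * (2 / (2 + L)) ^ 2 * (Real.exp ((2 + L) * t / 2) - 1 - t) * δ := by
  have hL : 0 ≤ L := hLdef ▸ le_max_of_le_right hτ.le
  have hC : 0 ≤ L' * δ := (abs_nonneg _).trans (hparam 0 0)
  have he := (HasDerivAt.continuousOn hxl).sub (HasDerivAt.continuousOn hx)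
  have hw := (HasDerivAt.continuousOn hxl').sub (HasDerivAt.continuousOn hx')
  have hpos := abs_sub_le_abs_sub_add_integral_of_hasDerivAt_damped le_rfl
    (fun s hs => by simpa using hxl s hs) (fun s hs => by simpa using hx s hs)
    (HasDerivAt.continuousOn hxl') (HasDerivAt.continuousOn hx') hw.abs fun s _ => le_rfl
  have hvel := abs_sub_le_abs_sub_add_integral_of_hasDerivAt_damped hτ.le hxl' hx'
    (hgl_cont.comp_continuousOn (continuousOn_id.prodMk (HasDerivAt.continuousOn hxl)))
    (hg_cont.comp_continuousOn (continuousOn_id.prodMk (HasDerivAt.continuousOn hx)))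
    ((continuousOn_const.mul he.abs).add continuousOn_const) fun s _ =>
    abs_sub_le_mul_abs_sub_add_of_lipschitz (hLdef ▸ le_max_left _ _) hgl_lip hparam s _ _
  set c : ℝ := (2 + L) / 2 with hc_def
  have hc : 1 ≤ c := by linarith
  have hLc : L ≤ c ^ 2 := by nlinarith [sq_nonneg L]
  intro t ht
  calc |xl t - x t| ≤ secondOrderBound c |x₀l| |xd₀l| (L * |x₀l| + L' * δ) t :=
        le_of_integral_supersolution hL he.abs hw.abs continuous_secondOrderBound.continuousOn
          continuous_secondOrderBoundDeriv.continuousOn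
          (fun t ht => by simpa [hxl0, hx0] using hpos t ht)
          (fun t ht => by simpa [hxl'0, hx'0] using hvel t ht)
          (fun t _ => add_integral_secondOrderBoundDeriv (by positivity) t)
          (fun t ht => add_integral_le_secondOrderBoundDeriv hc hLc (abs_nonneg _)
            (by positivity) le_rfl ht.1) t ht
    _ = _ := by
        rw [show (2 + L) * t / 2 = c * t by ring]
        unfold secondOrderBound
        field_simp
        ring

theorem rlc_stability {τ β L' δ : ℝ}
    (hτ : 0 < τ) (hβ : 0 < β) (hL' : 0 < L') (hδ : 0 ≤ δ)
    (L : ℝ) (hLdef : L = max β τ)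
    (g gl : ℝ → ℝ → ℝ)
    (hg_cont : Continuous fun p : ℝ × ℝ => g p.1 p.2)
    (hgl_cont : Continuous fun p : ℝ × ℝ => gl p.1 p.2)
    (hg_lip : ∀ t x x', |g t x - g t x'| ≤ β * |x - x'|)
    (hgl_lip : ∀ t x x', |gl t x - gl t x'| ≤ β * |x - x'|)
    (hparam : ∀ t x, |g t x - gl t x| ≤ L' * δ)
    (x₀l xd₀l : ℝ)
    (x x' xl xl' : ℝ → ℝ)
    (hx : ∀ t ∈ Set.Icc (0 : ℝ) 1, HasDerivAt x (x' t) t)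
    (hx' : ∀ t ∈ Set.Icc (0 : ℝ) 1, HasDerivAt x' (g t (x t) - τ * x' t) t)
    (hx0 : x 0 = 0) (hx'0 : x' 0 = 0)
    (hxl : ∀ t ∈ Set.Icc (0 : ℝ) 1, HasDerivAt xl (xl' t) t)
    (hxl' : ∀ t ∈ Set.Icc (0 : ℝ) 1, HasDerivAt xl' (gl t (xl t) - τ * xl' t) t)
    (hxl0 : xl 0 = x₀l) (hxl'0 : xl' 0 = xd₀l) :
    ∀ t ∈ Set.Icc (0 : ℝ) 1,
      |xl t - x t| ≤
        (1 + L * (2 / (2 + L)) ^ 2 * (Real.exp ((2 + L) * t / 2) - 1 - t)) * |x₀l|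
        + (2 / (2 + L)) * (Real.exp ((2 + L) * t / 2) - 1) * |xd₀l|
        + L' * (2 / (2 + L)) ^ 2 * (Real.exp ((2 + L) * t / 2) - 1 - t) * δ :=
  rlc_stability_general hτ L hLdef g gl hg_cont hgl_cont hgl_lip hparam x₀l xd₀l x x' xl xl' hx hx'
    hx0 hx'0 hxl hxl' hxl0 hxl'0
end

section
/- (Green's function reformulation of the RLC equation.) Let τ > 0 and G(t,s) = (1/τ)(1 − e^{τ(s−t)}) for 0 ≤ s ≤ t ≤ 1 and G(t,s) = 0 for 0 ≤ t < s ≤ 1. If g : [0,1] × ℝ → ℝ is continuous and x : [0,1] → ℝ is C², then x satisfies x''(t) + τx'(t) = g(t, x(t)) for all t ∈ [0,1] with x(0) = x'(0) = 0 if and only if x(t) = ∫₀¹ G(t,s)·g(s, x(s)) ds for all t ∈ [0,1]. -/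
/-!
Since `G(t, s) = τ⁻¹ (1 - e^{-τt} e^{τs})` for `s ≤ t` and `G(t, s) = 0` for `s ≥ t`, the integral
`∫₀¹ G(t, s) f(s) ds` is the variation-of-constants solution `y` of `y'' + τ y' = f`,
`y(0) = y'(0) = 0`, whose derivative is `y' = e^{-τt} ∫₀ᵗ e^{τs} f(s) ds`; here `f(s) = g(s, x(s))`.
If `x` solves the initial value problem, Grönwall's inequality applied first to `x' - y'`
(which satisfies `w' = -τ w`) and then to `x - y` gives `x = y` on `[0, 1]`. Conversely, if
`x = y` on `[0, 1]`, then the one-sided derivatives at the endpoints agree, so `x` inherits the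
equation and the initial conditions from `y`.
-/

open Set Real intervalIntegral

noncomputable def rlcGreen (τ t s : ℝ) : ℝ :=
  if s ≤ t then (1 / τ) * (1 - exp (τ * (s - t))) else 0

section Uniqueness

variable {a b : ℝ}

theorem eqOn_zero_of_hasDerivAt_mul_self {c : ℝ} {w : ℝ → ℝ}
    (hw : ∀ t ∈ Icc a b, HasDerivAt w (c * w t) t) (ha : w a = 0) : EqOn w 0 (Icc a b) :=
  eq_zero_of_abs_deriv_le_mul_abs_self_of_eq_zero_right
    (fun t ht => (hw t ht).continuousAt.continuousWithinAt)
    (fun t ht => (hw t (Ico_subset_Icc_self ht)).hasDerivWithinAt) ha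
    (fun t _ => (norm_mul c (w t)).le)

theorem eqOn_of_hasDerivAt_damped {τ : ℝ} {f u u' v v' : ℝ → ℝ}
    (hu : ∀ t ∈ Icc a b, HasDerivAt u (u' t) t)
    (hu' : ∀ t ∈ Icc a b, HasDerivAt u' (f t - τ * u' t) t)
    (hv : ∀ t ∈ Icc a b, HasDerivAt v (v' t) t)
    (hv' : ∀ t ∈ Icc a b, HasDerivAt v' (f t - τ * v' t) t)
    (ha : u a = v a) (ha' : u' a = v' a) : EqOn u v (Icc a b) := by
  have hderiv : EqOn (u' - v') 0 (Icc a b) :=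
    eqOn_zero_of_hasDerivAt_mul_self (c := -τ)
      (fun t ht => ((hu' t ht).sub (hv' t ht)).congr_deriv (by simp only [Pi.sub_apply]; ring))
      (sub_eq_zero.mpr ha')
  have hdiff : EqOn (u - v) 0 (Icc a b) :=
    eqOn_zero_of_hasDerivAt_mul_self (c := 0)
      (fun t ht => ((hu t ht).sub (hv t ht)).congr_deriv
        (by rw [zero_mul, ← Pi.sub_apply, hderiv ht, Pi.zero_apply]))
      (sub_eq_zero.mpr ha)
  exact fun t ht => sub_eq_zero.mp (hdiff ht)

theorem eqOn_deriv_of_eqOn_Icc (hab : a < b) {u v v' : ℝ → ℝ} (huv : EqOn u v (Icc a b))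
    (hu : ∀ t ∈ Icc a b, DifferentiableAt ℝ u t) (hv : ∀ t ∈ Icc a b, HasDerivAt v (v' t) t) :
    EqOn (deriv u) v' (Icc a b) := fun t ht =>
  (uniqueDiffOn_Icc hab t ht).eq_deriv _ (hu t ht).hasDerivAt.hasDerivWithinAt
    ((hv t ht).hasDerivWithinAt.congr huv (huv ht))

end Uniqueness

section VariationOfConstants

variable {τ : ℝ} {f : ℝ → ℝ}

noncomputable def dampedSolutionDeriv (τ : ℝ) (f : ℝ → ℝ) (t : ℝ) : ℝ :=
  exp (-(τ * t)) * ∫ s in 0..t, exp (τ * s) * f s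

/-- The solution of `y'' + τ y' = f`, `y 0 = y' 0 = 0`, obtained by variation of constants. -/
noncomputable def dampedSolution (τ : ℝ) (f : ℝ → ℝ) (t : ℝ) : ℝ :=
  τ⁻¹ * ((∫ s in 0..t, f s) - dampedSolutionDeriv τ f t)

@[simp] theorem dampedSolutionDeriv_zero : dampedSolutionDeriv τ f 0 = 0 := by
  simp [dampedSolutionDeriv]

@[simp] theorem dampedSolution_zero : dampedSolution τ f 0 = 0 := by
  simp [dampedSolution]

theorem hasDerivAt_dampedSolutionDeriv (hf : Continuous f) (t : ℝ) :
    HasDerivAt (dampedSolutionDeriv τ f) (f t - τ * dampedSolutionDeriv τ f t) t := by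
  have hexp : HasDerivAt (fun u => exp (-(τ * u))) (exp (-(τ * t)) * -τ) t := by
    simpa using ((hasDerivAt_id t).const_mul τ).neg.exp
  have hint : Continuous fun s => exp (τ * s) * f s := by fun_prop
  refine (hexp.mul (hint.integral_hasStrictDerivAt 0 t).hasDerivAt).congr_deriv ?_
  rw [dampedSolutionDeriv, ← mul_assoc, ← exp_add, neg_add_cancel, exp_zero]
  ring

theorem hasDerivAt_dampedSolution (hτ : τ ≠ 0) (hf : Continuous f) (t : ℝ) :
    HasDerivAt (dampedSolution τ f) (dampedSolutionDeriv τ f t) t := by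
  refine (((hf.integral_hasStrictDerivAt 0 t).hasDerivAt.sub
    (hasDerivAt_dampedSolutionDeriv hf t)).const_mul τ⁻¹).congr_deriv ?_
  rw [sub_sub_cancel, ← mul_assoc, inv_mul_cancel₀ hτ, one_mul]

end VariationOfConstants

section Green

variable {τ t : ℝ}

theorem continuous_rlcGreen : Continuous (rlcGreen τ t) :=
  Continuous.if_le (by fun_prop) continuous_const continuous_id continuous_const
    (fun s hs => by simp [hs])

theorem rlcGreen_eq_zero_of_le {s : ℝ} (hts : t ≤ s) : rlcGreen τ t s = 0 := by
  rcases hts.eq_or_lt with rfl | hlt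
  · simp [rlcGreen]
  · simp [rlcGreen, hlt.not_ge]

theorem rlcGreen_of_le {s : ℝ} (hst : s ≤ t) :
    rlcGreen τ t s = τ⁻¹ - exp (-(τ * t)) * (τ⁻¹ * exp (τ * s)) := by
  rw [rlcGreen, if_pos hst, show τ * (s - t) = -(τ * t) + τ * s by ring, exp_add]
  ring

theorem integral_rlcGreen_mul {b : ℝ} {f : ℝ → ℝ} (hf : Continuous f) (ht₀ : 0 ≤ t)
    (htb : t ≤ b) : ∫ s in 0..b, rlcGreen τ t s * f s = dampedSolution τ f t := by
  have hint (u v : ℝ) :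
      IntervalIntegrable (fun s => rlcGreen τ t s * f s) MeasureTheory.volume u v :=
    (continuous_rlcGreen.mul hf).intervalIntegrable u v
  have hright : ∫ s in t..b, rlcGreen τ t s * f s = 0 := by
    rw [integral_congr (g := fun _ => 0), integral_zero]
    intro s hs
    rw [uIcc_of_le htb] at hs
    simp [rlcGreen_eq_zero_of_le hs.1]
  have hleft : ∫ s in 0..t, rlcGreen τ t s * f s = dampedSolution τ f t := by
    have hcongr : EqOn (fun s => rlcGreen τ t s * f s)
        (fun s => τ⁻¹ * f s - exp (-(τ * t)) * (τ⁻¹ * (exp (τ * s) * f s))) (uIcc 0 t) := by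
      intro s hs
      rw [uIcc_of_le ht₀] at hs
      simp only [rlcGreen_of_le hs.2]
      ring
    rw [integral_congr hcongr, integral_sub (Continuous.intervalIntegrable (by fun_prop) _ _)
      (Continuous.intervalIntegrable (by fun_prop) _ _),
      integral_const_mul, integral_const_mul, integral_const_mul, dampedSolution,
      dampedSolutionDeriv]
    ring
  rw [← integral_add_adjacent_intervals (hint 0 t) (hint t b), hleft, hright, add_zero]

end Green

theorem greens_function_reformulation {τ : ℝ} (hτ : 0 < τ)
    (G : ℝ → ℝ → ℝ)
    (hG : ∀ t s : ℝ, G t s = if s ≤ t then (1 / τ) * (1 - Real.exp (τ * (s - t))) else 0)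
    (g : ℝ → ℝ → ℝ) (hg : Continuous fun p : ℝ × ℝ => g p.1 p.2)
    (x : ℝ → ℝ) (hx : ContDiff ℝ 2 x) :
    ((∀ t ∈ Set.Icc (0 : ℝ) 1, deriv (deriv x) t + τ * deriv x t = g t (x t)) ∧
      x 0 = 0 ∧ deriv x 0 = 0) ↔
    (∀ t ∈ Set.Icc (0 : ℝ) 1, x t = ∫ s in (0 : ℝ)..1, G t s * g s (x s)) := by
  obtain rfl : G = rlcGreen τ := funext₂ hG
  set f : ℝ → ℝ := fun s => g s (x s)
  have hf : Continuous f := hg.comp (continuous_id.prodMk hx.continuous)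
  have hy := hasDerivAt_dampedSolution hτ.ne' hf
  have hy' := hasDerivAt_dampedSolutionDeriv (τ := τ) hf
  have hx₁ : Differentiable ℝ x := hx.differentiable two_ne_zero
  have hx₂ : Differentiable ℝ (deriv x) := (hx.iterate_deriv' 1 1).differentiable one_ne_zero
  have hrepr : (∀ t ∈ Icc (0 : ℝ) 1, x t = ∫ s in 0..1, rlcGreen τ t s * f s) ↔
      EqOn x (dampedSolution τ f) (Icc 0 1) :=
    forall₂_congr fun t ht => by rw [integral_rlcGreen_mul hf ht.1 ht.2]
  rw [hrepr]
  constructor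
  · rintro ⟨hode, hx0, hx'0⟩
    exact eqOn_of_hasDerivAt_damped (fun t _ => (hx₁ t).hasDerivAt)
      (fun t ht => (hx₂ t).hasDerivAt.congr_deriv (eq_sub_of_add_eq (hode t ht)))
      (fun t _ => hy t) (fun t _ => hy' t) (by simp [hx0]) (by simp [hx'0])
  · intro hxy
    have hderiv := eqOn_deriv_of_eqOn_Icc one_pos hxy (fun t _ => hx₁ t) (fun t _ => hy t)
    have hderiv₂ := eqOn_deriv_of_eqOn_Icc one_pos hderiv (fun t _ => hx₂ t) (fun t _ => hy' t)
    refine ⟨fun t ht => ?_, by simp [hxy (left_mem_Icc.mpr zero_le_one)],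
      by simp [hderiv (left_mem_Icc.mpr zero_le_one)]⟩
    rw [hderiv₂ ht, hderiv ht]
    ring
end
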